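/- arXiv:1907.06220 — 5 statements merged into one kernel-verified Lean document; each statement's English description precedes it below -/
import Mathlib

section
/- Let ω be a non-principal ultrafilter on ℕ and ρ_n → 0 a positive sequence. The set M_1 = {t ∈ *ℂ : |t_n| < ρ_n^N ω-almost surely, for all N ∈ ℕ} is a maximal ideal of the ring M_0 = {t ∈ *ℂ : there exists N ∈ ℕ with |t_n| < ρ_n^{-N} ω-almost surely}. -/
/-!
Since `ρ → 0`, eventually `ρ ≤ 1/2`, which absorbs the factor `2` of the triangle inequality at
the cost of one power of `ρ`; this makes `M0` a ring and `M1` an ideal of it. Over an ultrafilter,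
a germ `u` outside `M1` satisfies `ρ^N ≤ ‖u‖` almost surely for some `N`, so `u⁻¹` is bounded by
`ρ^(-(N+1))` and `u` is a unit of `M0`. Hence every ideal strictly containing `M1` contains `1`.
-/

open Filter Topology

variable {α 𝕜 : Type*} [NormedField 𝕜] {l : Filter α} {ρ : α → ℝ} {u v : α → 𝕜}

def PolyBounded (l : Filter α) (ρ : α → ℝ) (u : α → 𝕜) : Prop :=
  ∃ N : ℕ, ∀ᶠ n in l, ‖u n‖ < (ρ n)⁻¹ ^ N

def Negligible (l : Filter α) (ρ : α → ℝ) (u : α → 𝕜) : Prop :=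
  ∀ N : ℕ, ∀ᶠ n in l, ‖u n‖ < ρ n ^ N

theorem polyBounded_one (hρ : Tendsto ρ l (𝓝[>] 0)) : PolyBounded l ρ (1 : α → 𝕜) :=
  ⟨1, by
    filter_upwards [hρ (Ioo_mem_nhdsGT one_pos)] with n ⟨hpos, hlt⟩
    simpa using (one_lt_inv₀ hpos).2 hlt⟩

theorem PolyBounded.neg (hu : PolyBounded l ρ u) : PolyBounded l ρ (-u) := by
  simpa [PolyBounded] using hu

theorem PolyBounded.add (hρ : Tendsto ρ l (𝓝[>] 0)) (hu : PolyBounded l ρ u)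
    (hv : PolyBounded l ρ v) : PolyBounded l ρ (u + v) := by
  obtain ⟨N, hu⟩ := hu
  obtain ⟨M, hv⟩ := hv
  refine ⟨N + M + 1, ?_⟩
  filter_upwards [hu, hv, hρ (Ioo_mem_nhdsGT one_half_pos)] with n hun hvn ⟨hpos, hsmall⟩
  have htwo : 2 ≤ (ρ n)⁻¹ := by rw [le_inv_comm₀ two_pos hpos]; linarith
  have hN : (ρ n)⁻¹ ^ N ≤ (ρ n)⁻¹ ^ (N + M) := pow_le_pow_right₀ (by linarith) (by omega)
  have hM : (ρ n)⁻¹ ^ M ≤ (ρ n)⁻¹ ^ (N + M) := pow_le_pow_right₀ (by linarith) (by omega)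
  have hsucc : 2 * (ρ n)⁻¹ ^ (N + M) ≤ (ρ n)⁻¹ ^ (N + M + 1) := by
    rw [pow_succ, mul_comm]; gcongr
  rw [Pi.add_apply]
  linarith [norm_add_le (u n) (v n)]

theorem PolyBounded.mul (hu : PolyBounded l ρ u) (hv : PolyBounded l ρ v) :
    PolyBounded l ρ (u * v) := by
  obtain ⟨N, hu⟩ := hu
  obtain ⟨M, hv⟩ := hv
  refine ⟨N + M, ?_⟩
  filter_upwards [hu, hv] with n hun hvn
  rw [Pi.mul_apply, norm_mul, pow_add]
  exact mul_lt_mul'' hun hvn (norm_nonneg _) (norm_nonneg _)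

theorem negligible_zero (hρ : ∀ᶠ n in l, 0 < ρ n) : Negligible l ρ (0 : α → 𝕜) := fun N => by
  filter_upwards [hρ] with n hpos
  simpa using pow_pos hpos N

theorem Negligible.polyBounded (hu : Negligible l ρ u) : PolyBounded l ρ u :=
  ⟨0, by simpa using hu 0⟩

theorem Negligible.congr (hu : Negligible l ρ u) (huv : u =ᶠ[l] v) : Negligible l ρ v :=
  fun N => by
    filter_upwards [hu N, huv] with n hun huvn
    rwa [← huvn]

theorem not_negligible_one [l.NeBot] : ¬Negligible l ρ (1 : α → 𝕜) := fun h => by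
  obtain ⟨n, hn⟩ := (h 0).exists
  simp at hn

theorem Negligible.add (hρ : Tendsto ρ l (𝓝[>] 0)) (hu : Negligible l ρ u)
    (hv : Negligible l ρ v) : Negligible l ρ (u + v) := fun N => by
  filter_upwards [hu (N + 1), hv (N + 1), hρ (Ioo_mem_nhdsGT one_half_pos)]
    with n hun hvn ⟨hpos, hsmall⟩
  have hsucc : 2 * ρ n ^ (N + 1) ≤ ρ n ^ N := by
    rw [pow_succ]; nlinarith [pow_pos hpos N]
  rw [Pi.add_apply]
  linarith [norm_add_le (u n) (v n)]

theorem PolyBounded.mul_negligible (hρ : ∀ᶠ n in l, 0 < ρ n) (hu : PolyBounded l ρ u)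
    (hv : Negligible l ρ v) : Negligible l ρ (u * v) := fun N => by
  obtain ⟨M, hu⟩ := hu
  filter_upwards [hu, hv (N + M), hρ] with n hun hvn hpos
  calc ‖(u * v) n‖ = ‖u n‖ * ‖v n‖ := norm_mul _ _
    _ < (ρ n)⁻¹ ^ M * ρ n ^ (N + M) := mul_lt_mul'' hun hvn (norm_nonneg _) (norm_nonneg _)
    _ = ρ n ^ N := by rw [pow_add, inv_pow]; field_simp

theorem exists_pow_le_norm_of_not_negligible {ω : Ultrafilter α} (hu : ¬Negligible ω ρ u) :
    ∃ N : ℕ, ∀ᶠ n in ω, ρ n ^ N ≤ ‖u n‖ := by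
  simpa [Negligible, ← Ultrafilter.eventually_not] using hu

theorem polyBounded_inv_of_pow_le_norm (hρ : Tendsto ρ l (𝓝[>] 0)) {N : ℕ}
    (hu : ∀ᶠ n in l, ρ n ^ N ≤ ‖u n‖) : PolyBounded l ρ u⁻¹ :=
  ⟨N + 1, by
    filter_upwards [hu, hρ (Ioo_mem_nhdsGT one_pos)] with n hun ⟨hpos, hlt⟩
    calc ‖u⁻¹ n‖ = ‖u n‖⁻¹ := norm_inv _
      _ ≤ (ρ n ^ N)⁻¹ := inv_anti₀ (pow_pos hpos N) hun
      _ = (ρ n)⁻¹ ^ N := (inv_pow _ _).symm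
      _ < (ρ n)⁻¹ ^ (N + 1) := pow_lt_pow_right₀ ((one_lt_inv₀ hpos).2 hlt) N.lt_succ_self⟩

theorem inv_mul_eventuallyEq_one_of_pow_le_norm (hρ : ∀ᶠ n in l, 0 < ρ n) {N : ℕ}
    (hu : ∀ᶠ n in l, ρ n ^ N ≤ ‖u n‖) : u⁻¹ * u =ᶠ[l] 1 := by
  filter_upwards [hu, hρ] with n hun hpos
  exact inv_mul_cancel₀ (norm_pos_iff.1 ((pow_pos hpos N).trans_le hun))

theorem exists_polyBounded_mul_eq_one {ω : Ultrafilter α} (hρ : Tendsto ρ ω (𝓝[>] 0))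
    (hu : ¬Negligible ω ρ u) :
    ∃ v : α → 𝕜, PolyBounded ω ρ v ∧ (v * u : Germ (ω : Filter α) 𝕜) = 1 := by
  obtain ⟨N, hN⟩ := exists_pow_le_norm_of_not_negligible hu
  exact ⟨u⁻¹, polyBounded_inv_of_pow_le_norm hρ hN,
    Germ.coe_eq.2 (inv_mul_eventuallyEq_one_of_pow_le_norm (hρ self_mem_nhdsWithin) hN)⟩

/-- Let ω be a non-principal ultrafilter on ℕ and ρ_n → 0 a positive sequence.
In the ultrapower *ℂ (germs of sequences of complex numbers along ω), the set
`M1` of sequences smaller than every power ρ^N is a maximal ideal of the ring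
`M0` of sequences of at most polynomial growth in ρ^{-1}. -/
theorem M1_maximal_ideal_of_M0
    (ω : Ultrafilter ℕ) (hω : ¬∃ a : ℕ, ω = pure a)
    (ρ : ℕ → ℝ) (hρpos : ∀ n, 0 < ρ n) (hρ0 : Tendsto ρ atTop (nhds 0))
    (M0 M1 : Set (Filter.Germ (ω : Filter ℕ) ℂ))
    (hM0 : M0 = {t | ∃ u : ℕ → ℂ, t = Filter.Germ.ofFun u ∧
      ∃ N : ℕ, ∀ᶠ n in (ω : Filter ℕ), ‖u n‖ < ρ n ^ (-(N : ℝ))})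
    (hM1 : M1 = {t | ∃ u : ℕ → ℂ, t = Filter.Germ.ofFun u ∧
      ∀ N : ℕ, ∀ᶠ n in (ω : Filter ℕ), ‖u n‖ < ρ n ^ (N : ℝ)}) :
    -- M0 is a subring of *ℂ:
    ((1 : Filter.Germ (ω : Filter ℕ) ℂ) ∈ M0) ∧
    (∀ x ∈ M0, ∀ y ∈ M0, x + y ∈ M0) ∧
    (∀ x ∈ M0, ∀ y ∈ M0, x * y ∈ M0) ∧
    (∀ x ∈ M0, -x ∈ M0) ∧
    -- M1 is an ideal of M0:
    M1 ⊆ M0 ∧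
    ((0 : Filter.Germ (ω : Filter ℕ) ℂ) ∈ M1) ∧
    (∀ x ∈ M1, ∀ y ∈ M1, x + y ∈ M1) ∧
    (∀ x ∈ M0, ∀ y ∈ M1, x * y ∈ M1) ∧
    -- M1 is a proper ideal:
    M1 ≠ M0 ∧
    -- and M1 is maximal among ideals of M0:
    (∀ I : Set (Filter.Germ (ω : Filter ℕ) ℂ),
      M1 ⊆ I → I ⊆ M0 → (0 : Filter.Germ (ω : Filter ℕ) ℂ) ∈ I →
      (∀ x ∈ I, ∀ y ∈ I, x + y ∈ I) →
      (∀ x ∈ M0, ∀ y ∈ I, x * y ∈ I) →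
      I ≠ M0 → I = M1) := by
  have hρ : Tendsto ρ ω (𝓝[>] 0) := by
    refine tendsto_nhdsWithin_iff.2 ⟨hρ0.mono_left ?_, .of_forall hρpos⟩
    rw [← Nat.cofinite_eq_atTop]
    exact ω.le_cofinite_or_eq_pure.resolve_right hω
  have hpos : ∀ᶠ n in (ω : Filter ℕ), 0 < ρ n := .of_forall hρpos
  replace hM0 : M0 = {t | ∃ u, t = Germ.ofFun u ∧ PolyBounded ω ρ u} := by
    simp only [hM0, PolyBounded, Real.rpow_neg_natCast, zpow_neg, zpow_natCast, inv_pow]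
  replace hM1 : M1 = {t | ∃ u, t = Germ.ofFun u ∧ Negligible ω ρ u} := by
    simp only [hM1, Negligible, Real.rpow_natCast]
  subst hM0 hM1
  have hone : (1 : Germ (ω : Filter ℕ) ℂ) ∈ {t | ∃ u, t = Germ.ofFun u ∧ PolyBounded ω ρ u} :=
    ⟨1, rfl, polyBounded_one hρ⟩
  refine ⟨hone, ?_, ?_, ?_, ?_, ⟨0, rfl, negligible_zero hpos⟩, ?_, ?_, ?_, ?_⟩
  · rintro _ ⟨u, rfl, hu⟩ _ ⟨v, rfl, hv⟩; exact ⟨u + v, rfl, hu.add hρ hv⟩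
  · rintro _ ⟨u, rfl, hu⟩ _ ⟨v, rfl, hv⟩; exact ⟨u * v, rfl, hu.mul hv⟩
  · rintro _ ⟨u, rfl, hu⟩; exact ⟨-u, rfl, hu.neg⟩
  · rintro _ ⟨u, rfl, hu⟩; exact ⟨u, rfl, hu.polyBounded⟩
  · rintro _ ⟨u, rfl, hu⟩ _ ⟨v, rfl, hv⟩; exact ⟨u + v, rfl, hu.add hρ hv⟩
  · rintro _ ⟨u, rfl, hu⟩ _ ⟨v, rfl, hv⟩; exact ⟨u * v, rfl, hu.mul_negligible hpos hv⟩
  · intro h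
    obtain ⟨u, hu1, hu⟩ := h ▸ hone
    exact not_negligible_one (hu.congr (Germ.coe_eq.1 hu1.symm))
  · intro I hM1I hIM0 _ _ hmul hI
    refine Set.Subset.antisymm (fun x hx => ?_) hM1I
    by_contra hxM1
    obtain ⟨u, rfl, -⟩ := hIM0 hx
    obtain ⟨v, hv, hvu⟩ := exists_polyBounded_mul_eq_one hρ fun hu => hxM1 ⟨u, rfl, hu⟩
    have h1I : (1 : Germ (ω : Filter ℕ) ℂ) ∈ I := hvu ▸ hmul _ ⟨v, rfl, hv⟩ _ hx
    exact hI (hIM0.antisymm fun y hy => mul_one y ▸ hmul y hy 1 h1I)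
end

section
/- Let x ∈ M_0 \ M_1 and i ∈ M_1 with x + i ∈ M_0 \ M_1. Then lim_ω (log|x_n + i_n| / log ρ_n) = lim_ω (log|x_n| / log ρ_n). Consequently, ν([x]) := lim_ω log|x_n|/log ρ_n is a well-defined function on the nonzero elements of the quotient field ρℂ = M_0/M_1. -/
/-!
Since `x ∉ M₁` gives `ρₙ^N ≤ |xₙ|` and `i ∈ M₁` gives `|iₙ| < ρₙ^(N+1)`, eventually
`|iₙ| ≤ |xₙ|/2`, so `log|xₙ + iₙ|` and `log|xₙ|` differ by at most `log 2`; divided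
by `log ρₙ → -∞` this difference vanishes in the ω-limit. The ω-limit of
`log|xₙ|/log ρₙ` exists because `ρₙ^N ≤ |xₙ| < ρₙ^(-M)` confines the quotient to
the compact interval `[-M, N]`.
-/

open Filter

/-- `OmegaLim ω u L` : the real number `L` is the ω-limit of the sequence `u`. -/
def OmegaLim (ω : Ultrafilter ℕ) (u : ℕ → ℝ) (L : ℝ) : Prop :=
  ∀ ε : ℝ, 0 < ε → {n : ℕ | |u n - L| < ε} ∈ ω

open Topology

theorem omegaLim_iff_tendsto {ω : Ultrafilter ℕ} {u : ℕ → ℝ} {L : ℝ} :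
    OmegaLim ω u L ↔ Tendsto u ω (𝓝 L) := by
  simp only [OmegaLim, Metric.tendsto_nhds, Real.dist_eq]
  rfl

theorem Ultrafilter.le_atTop_of_not_exists_eq_pure {ω : Ultrafilter ℕ}
    (hω : ¬∃ a, ω = pure a) : (ω : Filter ℕ) ≤ atTop :=
  Nat.cofinite_eq_atTop ▸ ω.le_cofinite_or_eq_pure.resolve_right hω

theorem IsCompact.exists_tendsto_ultrafilter {X α : Type*} [TopologicalSpace X] {K : Set X}
    (hK : IsCompact K) {ω : Ultrafilter α} {u : α → X} (hu : ∀ᶠ n in ω, u n ∈ K) :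
    ∃ L ∈ K, Tendsto u ω (𝓝 L) :=
  hK.ultrafilter_le_nhds' (ω.map u) hu

theorem tendsto_div_atBot_of_eventually_abs_le {α : Type*} {l : Filter α}
    {f g : α → ℝ} {C : ℝ} (hf : ∀ᶠ n in l, |f n| ≤ C) (hg : Tendsto g l atBot) :
    Tendsto (fun n => f n / g n) l (𝓝 0) := by
  simpa only [div_eq_inv_mul, Function.comp_def] using
    (tendsto_inv_atBot_zero.comp hg).zero_mul_isBoundedUnder_le
      (isBoundedUnder_of_eventually_le hf)

theorem log_div_log_mem_Icc {r a M N : ℝ} (hr0 : 0 < r) (hr1 : r < 1) (hlow : r ^ N ≤ a)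
    (hup : a ≤ r ^ (-M)) : Real.log a / Real.log r ∈ Set.Icc (-M) N := by
  have hlog : Real.log r < 0 := Real.log_neg hr0 hr1
  have ha : 0 < a := (Real.rpow_pos_of_pos hr0 N).trans_le hlow
  have hlow' := Real.log_le_log (Real.rpow_pos_of_pos hr0 N) hlow
  have hup' := Real.log_le_log ha hup
  rw [Real.log_rpow hr0] at hlow' hup'
  constructor
  · rw [le_div_iff_of_neg hlog]; linarith
  · rw [div_le_iff_of_neg hlog]; linarith

theorem abs_log_norm_add_sub_log_norm_le {E : Type*} [SeminormedAddCommGroup E] {a b : E}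
    (ha : 0 < ‖a‖) (hb : ‖b‖ ≤ ‖a‖ / 2) :
    |Real.log ‖a + b‖ - Real.log ‖a‖| ≤ Real.log 2 := by
  have hupper : ‖a + b‖ ≤ 2 * ‖a‖ := by linarith [norm_add_le a b]
  have hlower : ‖a‖ ≤ 2 * ‖a + b‖ := by
    have := norm_sub_le (a + b) b
    rw [add_sub_cancel_right] at this
    linarith
  have hab : 0 < ‖a + b‖ := by linarith
  have h1 := Real.log_le_log hab hupper
  have h2 := Real.log_le_log ha hlower
  rw [Real.log_mul two_ne_zero ha.ne'] at h1
  rw [Real.log_mul two_ne_zero hab.ne'] at h2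
  rw [abs_le]
  constructor <;> linarith

theorem eventually_norm_le_half_norm {α E F : Type*} [SeminormedAddCommGroup E]
    [SeminormedAddCommGroup F] {l : Filter α} {ρ : α → ℝ} (hρpos : ∀ n, 0 < ρ n)
    (hρ : Tendsto ρ l (𝓝 0)) {x : α → E} {i : α → F} {N : ℝ}
    (hx : ∀ᶠ n in l, ρ n ^ N ≤ ‖x n‖) (hi : ∀ᶠ n in l, ‖i n‖ < ρ n ^ (N + 1)) :
    ∀ᶠ n in l, ‖i n‖ ≤ ‖x n‖ / 2 := by
  filter_upwards [hx, hi, hρ.eventually (eventually_le_nhds one_half_pos)] with n hx hi hρ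
  have hρN := Real.rpow_pos_of_pos (hρpos n) N
  rw [Real.rpow_add_one (hρpos n).ne'] at hi
  nlinarith

theorem nu_well_defined_general
    (ω : Ultrafilter ℕ) (hω : ¬∃ a : ℕ, ω = pure a)
    (ρ : ℕ → ℝ) (hρpos : ∀ n, 0 < ρ n) (hρ0 : Tendsto ρ atTop (nhds 0))
    (x i : ℕ → ℂ)
    -- x ∈ M₀ :
    (hxM0 : ∃ N : ℕ, ∀ᶠ n in (ω : Filter ℕ), ‖x n‖ < ρ n ^ (-(N : ℝ)))
    -- x ∉ M₁ :
    (hxM1 : ∃ N : ℕ, ∀ᶠ n in (ω : Filter ℕ), ρ n ^ (N : ℝ) ≤ ‖x n‖)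
    -- i ∈ M₁ :
    (hi : ∀ N : ℕ, ∀ᶠ n in (ω : Filter ℕ), ‖i n‖ < ρ n ^ (N : ℝ)) :
    (∃ L : ℝ, OmegaLim ω (fun n => Real.log (‖x n‖) / Real.log (ρ n)) L) ∧
    (∀ L : ℝ,
      OmegaLim ω (fun n => Real.log (‖x n + i n‖) / Real.log (ρ n)) L ↔
      OmegaLim ω (fun n => Real.log (‖x n‖) / Real.log (ρ n)) L) := by
  obtain ⟨M, hxM0⟩ := hxM0
  obtain ⟨N, hxM1⟩ := hxM1
  have hρω : Tendsto ρ ω (𝓝 0) := hρ0.mono_left (Ultrafilter.le_atTop_of_not_exists_eq_pure hω)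
  have hρ1 : ∀ᶠ n in ω, ρ n < 1 := hρω.eventually (eventually_lt_nhds one_pos)
  have hlogρ : Tendsto (fun n => Real.log (ρ n)) ω atBot :=
    Real.tendsto_log_nhdsGT_zero.comp (tendsto_nhdsWithin_iff.2 ⟨hρω, .of_forall hρpos⟩)
  have hi_small : ∀ᶠ n in ω, ‖i n‖ ≤ ‖x n‖ / 2 :=
    eventually_norm_le_half_norm hρpos hρω hxM1 (by exact_mod_cast hi (N + 1))
  have hdiff : Tendsto (fun n => Real.log ‖x n + i n‖ / Real.log (ρ n) -
      Real.log ‖x n‖ / Real.log (ρ n)) ω (𝓝 0) := by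
    simp_rw [← sub_div]
    refine tendsto_div_atBot_of_eventually_abs_le (C := Real.log 2) ?_ hlogρ
    filter_upwards [hi_small, hxM1] with n hin hxn
    have hx_pos : 0 < ‖x n‖ := (Real.rpow_pos_of_pos (hρpos n) _).trans_le hxn
    exact abs_log_norm_add_sub_log_norm_le hx_pos hin
  obtain ⟨L, -, hL⟩ := isCompact_Icc.exists_tendsto_ultrafilter <| by
    filter_upwards [hxM0, hxM1, hρ1] with n hx0 hx1 hρn
    exact log_div_log_mem_Icc (hρpos n) hρn hx1 hx0.le
  refine ⟨⟨L, omegaLim_iff_tendsto.2 hL⟩, fun L' => ?_⟩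
  rw [omegaLim_iff_tendsto, omegaLim_iff_tendsto]
  exact ⟨fun h => by simpa using h.sub hdiff, fun h => by simpa using h.add hdiff⟩

/-- Let x ∈ M₀ \ M₁ and i ∈ M₁ with x + i ∈ M₀ \ M₁.  Then
lim_ω log|x_n + i_n|/log ρ_n exists and equals lim_ω log|x_n|/log ρ_n.
Consequently ν([x]) = lim_ω log|x_n|/log ρ_n is well defined on the nonzero
elements of the quotient field ρℂ = M₀/M₁. -/
theorem nu_well_defined
    (ω : Ultrafilter ℕ) (hω : ¬∃ a : ℕ, ω = pure a)
    (ρ : ℕ → ℝ) (hρpos : ∀ n, 0 < ρ n) (hρ0 : Tendsto ρ atTop (nhds 0))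
    (x i : ℕ → ℂ)
    -- x ∈ M₀ :
    (hxM0 : ∃ N : ℕ, ∀ᶠ n in (ω : Filter ℕ), ‖x n‖ < ρ n ^ (-(N : ℝ)))
    -- x ∉ M₁ :
    (hxM1 : ∃ N : ℕ, ∀ᶠ n in (ω : Filter ℕ), ρ n ^ (N : ℝ) ≤ ‖x n‖)
    -- i ∈ M₁ :
    (hi : ∀ N : ℕ, ∀ᶠ n in (ω : Filter ℕ), ‖i n‖ < ρ n ^ (N : ℝ))
    -- x + i ∈ M₀ \ M₁ :
    (hsM0 : ∃ N : ℕ, ∀ᶠ n in (ω : Filter ℕ),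
      ‖x n + i n‖ < ρ n ^ (-(N : ℝ)))
    (hsM1 : ∃ N : ℕ, ∀ᶠ n in (ω : Filter ℕ),
      ρ n ^ (N : ℝ) ≤ ‖x n + i n‖) :
    (∃ L : ℝ, OmegaLim ω (fun n => Real.log (‖x n‖) / Real.log (ρ n)) L) ∧
    (∀ L : ℝ,
      OmegaLim ω (fun n => Real.log (‖x n + i n‖) / Real.log (ρ n)) L ↔
      OmegaLim ω (fun n => Real.log (‖x n‖) / Real.log (ρ n)) L) :=
  nu_well_defined_general ω hω ρ hρpos hρ0 x i hxM0 hxM1 hi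
end

section
/- The complexified Robinson field ρℂ, equipped with the non-Archimedean metric d(x,y) = e^{−ν(x−y)}, is spherically complete: every nested decreasing sequence of closed balls in ρℂ has nonempty intersection. -/
/-!
A nested sequence of balls is given by centres `c k` with `|c (k+1) - c k|_ν ≤ e^{-q k}`. A point
in all of them is built by a diagonal argument along `ω`: at the index `n` take the centre
`c (f n)`, where `f n` is the largest level `k ≤ n` at which the first `k` increments satisfy
`k * ‖c (j+1) n - c j n‖ ≤ ρ n ^ (q j - 1/(k+1))`. Each level holds `ω`-almost everywhere, because
`ν` does not see constant factors, so `f → ∞` along `ω`; and the factor `k` absorbs the `f n` terms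
of the telescoping sum `c (f n) n - c k n`, which the Archimedean triangle inequality produces.
-/

open Filter Finset

/-- `LeNormBall ω ρ u q` : the element of ρℂ represented by the sequence `u`
has non-Archimedean norm `|u|_ν ≤ e^{-q}`, i.e. ν(u) ≥ q. -/
def LeNormBall (ω : Ultrafilter ℕ) (ρ : ℕ → ℝ) (u : ℕ → ℂ) (q : ℝ) : Prop :=
  ∀ ε : ℝ, 0 < ε → ∀ᶠ n in (ω : Filter ℕ), ‖u n‖ ≤ ρ n ^ (q - ε)

/-- The paper's `M₀`: sequences of moderate growth, which represent the elements of ρℂ. -/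
def Moderate (ω : Ultrafilter ℕ) (ρ : ℕ → ℝ) (u : ℕ → ℂ) : Prop :=
  ∃ N : ℕ, ∀ᶠ n in (ω : Filter ℕ), ‖u n‖ < ρ n ^ (-(N : ℝ))

theorem Ultrafilter.le_atTop_of_forall_ne_pure (ω : Ultrafilter ℕ) (hω : ¬∃ a : ℕ, ω = pure a) :
    (ω : Filter ℕ) ≤ atTop :=
  Nat.cofinite_eq_atTop ▸ ω.le_cofinite_or_eq_pure.resolve_right hω

theorem Filter.exists_tendsto_atTop_eventually_diagonal {l : Filter ℕ} (hl : l ≤ atTop)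
    {P : ℕ → ℕ → Prop} (hP : ∀ k, ∀ᶠ n in l, P k n) :
    ∃ f : ℕ → ℕ, Tendsto f l atTop ∧ ∀ᶠ n in l, P (f n) n := by
  classical
  refine ⟨fun n => Nat.findGreatest (P · n) n, tendsto_atTop.2 fun m => ?_, ?_⟩
  · filter_upwards [hP m, hl (eventually_ge_atTop m)] with n hm hmn
    exact Nat.le_findGreatest hmn hm
  · filter_upwards [hP 0] with n h0
    exact Nat.findGreatest_spec (P := (P · n)) (Nat.zero_le n) h0

theorem norm_sub_le_of_forall_mul_norm_sub_succ_le {E : Type*} [SeminormedAddCommGroup E]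
    {x : ℕ → E} {k m : ℕ} {B : ℝ} (hkm : k ≤ m) (hB : 0 ≤ B)
    (h : ∀ j ∈ Ico k m, m * ‖x (j + 1) - x j‖ ≤ B) : ‖x m - x k‖ ≤ B := by
  rcases Nat.eq_zero_or_pos m with rfl | hm
  · simp [Nat.le_zero.1 hkm, hB]
  have hsum : (m : ℝ) * ‖x m - x k‖ ≤ (m - k : ℕ) * B := by
    calc (m : ℝ) * ‖x m - x k‖ ≤ m * ∑ j ∈ Ico k m, ‖x (j + 1) - x j‖ := by
          gcongr
          simpa only [dist_eq_norm', dist_comm] using dist_le_Ico_sum_dist x hkm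
      _ = ∑ j ∈ Ico k m, m * ‖x (j + 1) - x j‖ := mul_sum _ _ _
      _ ≤ (m - k : ℕ) * B := by
          simpa only [Nat.card_Ico, nsmul_eq_mul] using sum_le_card_nsmul _ _ _ h
  have hmk : ((m - k : ℕ) : ℝ) ≤ m := by exact_mod_cast Nat.sub_le m k
  have hm' : (0 : ℝ) < m := by exact_mod_cast hm
  nlinarith

section RobinsonField

variable {ω : Ultrafilter ℕ} {ρ : ℕ → ℝ}

theorem LeNormBall.const_mul (hρpos : ∀ n, 0 < ρ n) (hρ : Tendsto ρ ω (nhds 0))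
    {u : ℕ → ℂ} {q : ℝ} (hu : LeNormBall ω ρ u q) (C : ℂ) :
    LeNormBall ω ρ (fun n => C * u n) q := by
  intro ε hε
  have hsmall : Tendsto (fun n => ‖C‖ * ρ n ^ (ε / 2)) ω (nhds 0) := by
    simpa [Real.zero_rpow (half_pos hε).ne'] using
      (hρ.rpow_const (Or.inr (half_pos hε).le)).const_mul ‖C‖
  filter_upwards [hu (ε / 2) (half_pos hε), hsmall.eventually (eventually_le_nhds one_pos)]
    with n hun hCn
  have hsplit : ρ n ^ (q - ε / 2) = ρ n ^ (ε / 2) * ρ n ^ (q - ε) := by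
    rw [← Real.rpow_add (hρpos n)]
    ring_nf
  have hpos : 0 ≤ ρ n ^ (q - ε) := Real.rpow_nonneg (hρpos n).le _
  calc ‖C * u n‖ = ‖C‖ * ‖u n‖ := norm_mul _ _
    _ ≤ ‖C‖ * ρ n ^ (ε / 2) * ρ n ^ (q - ε) := by
        rw [mul_assoc, ← hsplit]
        gcongr
    _ ≤ ρ n ^ (q - ε) := mul_le_of_le_one_left hpos hCn

theorem LeNormBall.moderate (hρpos : ∀ n, 0 < ρ n) (hρ : Tendsto ρ ω (nhds 0))
    {u : ℕ → ℂ} {q : ℝ} (hu : LeNormBall ω ρ u q) : Moderate ω ρ u := by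
  refine ⟨⌈1 - q⌉₊ + 1, ?_⟩
  filter_upwards [hu 1 one_pos, hρ.eventually (eventually_lt_nhds one_pos)] with n hun hρ1
  refine hun.trans_lt (Real.rpow_lt_rpow_of_exponent_gt (hρpos n) hρ1 ?_)
  push_cast
  linarith [Nat.le_ceil (1 - q)]

theorem Moderate.add (hρpos : ∀ n, 0 < ρ n) (hρ : Tendsto ρ ω (nhds 0))
    {u v : ℕ → ℂ} (hu : Moderate ω ρ u) (hv : Moderate ω ρ v) :
    Moderate ω ρ (fun n => u n + v n) := by
  obtain ⟨N, hN⟩ := hu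
  obtain ⟨M, hM⟩ := hv
  refine ⟨max N M + 1, ?_⟩
  filter_upwards [hN, hM, hρ.eventually (eventually_le_nhds one_half_pos)] with n hun hvn hρn
  have hmono : ∀ K ≤ max N M, ρ n ^ (-(K : ℝ)) ≤ ρ n ^ (-(max N M : ℝ)) := fun K hK =>
    Real.rpow_le_rpow_of_exponent_ge (hρpos n) (by linarith) (by simpa using hK)
  have hstep : 2 ≤ ρ n ^ (-(1 : ℝ)) := by
    rw [Real.rpow_neg_one, le_inv_comm₀ two_pos (hρpos n)]
    linarith
  calc ‖u n + v n‖ ≤ ‖u n‖ + ‖v n‖ := norm_add_le _ _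
    _ < ρ n ^ (-(N : ℝ)) + ρ n ^ (-(M : ℝ)) := add_lt_add hun hvn
    _ ≤ 2 * ρ n ^ (-(max N M : ℝ)) := by
        linarith [hmono N (le_max_left N M), hmono M (le_max_right N M)]
    _ ≤ ρ n ^ (-(1 : ℝ)) * ρ n ^ (-(max N M : ℝ)) :=
        mul_le_mul_of_nonneg_right hstep (Real.rpow_nonneg (hρpos n).le _)
    _ = ρ n ^ (-((max N M + 1 : ℕ) : ℝ)) := by
        rw [← Real.rpow_add (hρpos n)]
        push_cast
        ring_nf

theorem exists_forall_leNormBall (hρpos : ∀ n, 0 < ρ n) (hρ : Tendsto ρ ω (nhds 0))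
    (hle : (ω : Filter ℕ) ≤ atTop) {c : ℕ → ℕ → ℂ} {q : ℕ → ℝ} (hq : Monotone q)
    (hnest : ∀ k, LeNormBall ω ρ (fun n => c (k + 1) n - c k n) (q k)) :
    ∃ a : ℕ → ℂ, ∀ k, LeNormBall ω ρ (fun n => a n - c k n) (q k) := by
  have hgood : ∀ k : ℕ, ∀ᶠ n in (ω : Filter ℕ),
      ∀ j ∈ {j | j < k}, (k : ℝ) * ‖c (j + 1) n - c j n‖ ≤ ρ n ^ (q j - 1 / ((k : ℝ) + 1)) :=
    fun k => (Set.finite_lt_nat k).eventually_all.2 fun j _ => by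
      simpa only [norm_mul, Complex.norm_natCast] using
        (hnest j).const_mul hρpos hρ (k : ℂ) _ Nat.one_div_pos_of_nat
  obtain ⟨f, hf, hfgood⟩ := exists_tendsto_atTop_eventually_diagonal hle hgood
  refine ⟨fun n => c (f n) n, fun k ε hε => ?_⟩
  filter_upwards [hfgood, hf.eventually_ge_atTop k,
    (tendsto_one_div_add_atTop_nhds_zero_nat.comp hf).eventually (eventually_le_nhds hε),
    hρ.eventually (eventually_le_nhds one_pos)] with n hgood_n hkf hfε hρ1
  have hδ : 1 / ((f n : ℝ) + 1) ≤ ε := hfε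
  have hterm : ∀ j ∈ Ico k (f n),
      (f n : ℝ) * ‖c (j + 1) n - c j n‖ ≤ ρ n ^ (q k - 1 / ((f n : ℝ) + 1)) := fun j hj =>
    (hgood_n j (mem_Ico.1 hj).2).trans <| Real.rpow_le_rpow_of_exponent_ge (hρpos n) hρ1 <| by
      linarith [hq (mem_Ico.1 hj).1]
  calc ‖c (f n) n - c k n‖ ≤ ρ n ^ (q k - 1 / ((f n : ℝ) + 1)) :=
        norm_sub_le_of_forall_mul_norm_sub_succ_le (x := fun j => c j n) hkf
          (Real.rpow_nonneg (hρpos n).le _) hterm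
    _ ≤ ρ n ^ (q k - ε) := Real.rpow_le_rpow_of_exponent_ge (hρpos n) hρ1 (by linarith)

end RobinsonField

/-- The complexified Robinson field ρℂ is spherically complete: every nested
decreasing sequence of closed balls `B(c_k, e^{-q_k})` has a common point.
Nestedness is expressed by `q_k` nondecreasing and `|c_{k+1} - c_k|_ν ≤ e^{-q_k}`. -/
theorem robinson_field_spherically_complete
    (ω : Ultrafilter ℕ) (hω : ¬∃ a : ℕ, ω = pure a)
    (ρ : ℕ → ℝ) (hρpos : ∀ n, 0 < ρ n) (hρ0 : Tendsto ρ atTop (nhds 0))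
    (c : ℕ → ℕ → ℂ) (q : ℕ → ℝ)
    -- each center lies in M₀, i.e. represents an element of ρℂ:
    (hc : ∀ k, ∃ N : ℕ, ∀ᶠ n in (ω : Filter ℕ),
      ‖c k n‖ < ρ n ^ (-(N : ℝ)))
    -- the balls are nested:
    (hq : Monotone q)
    (hnest : ∀ k, LeNormBall ω ρ (fun n => c (k + 1) n - c k n) (q k)) :
    -- there is a point of ρℂ in every ball:
    ∃ a : ℕ → ℂ,
      (∃ N : ℕ, ∀ᶠ n in (ω : Filter ℕ), ‖a n‖ < ρ n ^ (-(N : ℝ))) ∧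
      ∀ k, LeNormBall ω ρ (fun n => a n - c k n) (q k) := by
  have hle := ω.le_atTop_of_forall_ne_pure hω
  have hρ : Tendsto ρ ω (nhds 0) := hρ0.mono_left hle
  obtain ⟨a, ha⟩ := exists_forall_leNormBall hρpos hρ hle hq hnest
  have hmod : Moderate ω ρ a := by
    simpa only [add_sub_cancel] using Moderate.add hρpos hρ (hc 0) ((ha 0).moderate hρpos hρ)
  exact ⟨a, hmod, ha⟩
end

section
/- The complexified Robinson field ρℂ is algebraically closed: every monic polynomial z^d + a_{d−1}z^{d−1} + ... + a_0 with coefficients in ρℂ and d ≥ 1 has a root in ρℂ. -/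
/-!
Since ℂ is algebraically closed, the polynomial can be solved exactly at every index `n`.
By Cauchy's bound each root `z n` has norm below `1 + ∑ j, ‖a j n‖`, and a sum of finitely many
sequences that are `O(ρ⁻ᴺ)` along `ω` is again of this form, because `ρ n → 0` along the
non-principal `ω`. So `z` lies in `M₀` and the polynomial vanishes at it identically.
-/

open Filter Polynomial Finset

namespace Polynomial

variable {K : Type*}

noncomputable def monicOfCoeffs [Semiring K] (d : ℕ) (a : ℕ → K) : K[X] :=
  X ^ d + ∑ j ∈ range d, C (a j) * X ^ j

section Semiring

variable [Semiring K] (d : ℕ) (a : ℕ → K)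

lemma degree_sum_C_mul_X_pow_lt [Nontrivial K] :
    (∑ j ∈ range d, C (a j) * X ^ j).degree < (d : WithBot ℕ) := by
  simp_rw [← Fin.sum_univ_eq_sum_range (fun j => C (a j) * X ^ j), degree_sum_fin_lt]

lemma monic_monicOfCoeffs [Nontrivial K] : (monicOfCoeffs d a).Monic :=
  monic_X_pow_add (degree_sum_C_mul_X_pow_lt d a)

lemma natDegree_monicOfCoeffs [Nontrivial K] : (monicOfCoeffs d a).natDegree = d := by
  rw [monicOfCoeffs, natDegree_add_eq_left_of_degree_lt, natDegree_X_pow]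
  simpa using degree_sum_C_mul_X_pow_lt d a

lemma coeff_monicOfCoeffs_of_lt {j : ℕ} (hj : j < d) : (monicOfCoeffs d a).coeff j = a j := by
  simp [monicOfCoeffs, coeff_X_pow, hj.ne, hj]

lemma eval_monicOfCoeffs (z : K) :
    (monicOfCoeffs d a).eval z = z ^ d + ∑ j ∈ range d, a j * z ^ j := by
  simp [monicOfCoeffs, eval_finsetSum, eval_X_pow]

end Semiring

lemma exists_root_monicOfCoeffs [Field K] [IsAlgClosed K] {d : ℕ} (hd : d ≠ 0) (a : ℕ → K) :
    ∃ z : K, z ^ d + ∑ j ∈ range d, a j * z ^ j = 0 := by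
  obtain ⟨z, hz⟩ := IsAlgClosed.exists_root (monicOfCoeffs d a) (by
    rw [degree_eq_natDegree (monic_monicOfCoeffs d a).ne_zero, natDegree_monicOfCoeffs]
    exact_mod_cast hd)
  exact ⟨z, by rwa [IsRoot, eval_monicOfCoeffs] at hz⟩

lemma norm_lt_one_add_sum_norm_of_root [NormedField K] {d : ℕ} {a : ℕ → K} {z : K}
    (hz : z ^ d + ∑ j ∈ range d, a j * z ^ j = 0) :
    ‖z‖ < 1 + ∑ j ∈ range d, ‖a j‖ := by
  have hroot : (monicOfCoeffs d a).IsRoot z := by rwa [IsRoot, eval_monicOfCoeffs]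
  have hbound := hroot.norm_lt_cauchyBound (monic_monicOfCoeffs d a).ne_zero
  have hsup : (range d).sup (fun j => ‖(monicOfCoeffs d a).coeff j‖₊) ≤ ∑ j ∈ range d, ‖a j‖₊ :=
    Finset.sup_le fun j hj => by
      rw [coeff_monicOfCoeffs_of_lt d a (mem_range.1 hj)]
      exact single_le_sum (f := fun j => ‖a j‖₊) (fun _ _ => zero_le) hj
  rw [cauchyBound, (monic_monicOfCoeffs d a).leadingCoeff, natDegree_monicOfCoeffs, nnnorm_one,
    div_one, add_comm] at hbound
  simpa using NNReal.coe_lt_coe.2 (hbound.trans_le (add_le_add_right hsup 1))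

end Polynomial

/-- With `r = ρ⁻¹`, `IsPolyBounded ω r (‖x ·‖)` says that `x` lies in `M₀`. -/
def IsPolyBounded {α : Type*} (l : Filter α) (r f : α → ℝ) : Prop :=
  ∃ N : ℕ, ∀ᶠ n in l, f n < r n ^ N

namespace IsPolyBounded

variable {α ι : Type*} {l : Filter α} {r f g : α → ℝ}

lemma mono (hf : IsPolyBounded l r f) (hgf : ∀ᶠ n in l, g n ≤ f n) : IsPolyBounded l r g :=
  let ⟨N, hN⟩ := hf
  ⟨N, hN.mp (hgf.mono fun _ hle hlt => hle.trans_lt hlt)⟩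

lemma const (hr : Tendsto r l atTop) (c : ℝ) : IsPolyBounded l r fun _ => c :=
  ⟨1, (hr.eventually_gt_atTop c).mono fun _ h => by rwa [pow_one]⟩

lemma add (hr : Tendsto r l atTop) (hf : IsPolyBounded l r f) (hg : IsPolyBounded l r g) :
    IsPolyBounded l r fun n => f n + g n := by
  obtain ⟨N, hN⟩ := hf
  obtain ⟨M, hM⟩ := hg
  refine ⟨N + M + 1, ?_⟩
  filter_upwards [hN, hM, hr.eventually_ge_atTop 2] with n hfn hgn hrn
  have hr1 : 1 ≤ r n := by linarith
  calc f n + g n < r n ^ N + r n ^ M := add_lt_add hfn hgn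
    _ ≤ r n ^ (N + M) + r n ^ (N + M) :=
        add_le_add (pow_le_pow_right₀ hr1 (by omega)) (pow_le_pow_right₀ hr1 (by omega))
    _ ≤ r n ^ (N + M + 1) := by
        rw [pow_succ', ← two_mul]
        gcongr

lemma sum (hr : Tendsto r l atTop) {s : Finset ι} {f : ι → α → ℝ}
    (hf : ∀ i ∈ s, IsPolyBounded l r (f i)) : IsPolyBounded l r fun n => ∑ i ∈ s, f i n := by
  rw [← Finset.sum_fn]
  exact Finset.sum_induction f (IsPolyBounded l r) (fun _ _ => add hr) (const hr 0) hf

end IsPolyBounded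

/-- The complexified Robinson field ρℂ = M₀/M₁ is algebraically closed: every
monic polynomial z^d + a_{d-1} z^{d-1} + ... + a_0 of degree d ≥ 1 with
coefficients in ρℂ (represented by sequences in M₀) has a root in ρℂ: there is
a sequence z in M₀ at which the polynomial evaluates to an element of M₁
(i.e. to zero in the quotient field). -/
theorem robinson_field_alg_closed
    (ω : Ultrafilter ℕ) (hω : ¬∃ a : ℕ, ω = pure a)
    (ρ : ℕ → ℝ) (hρpos : ∀ n, 0 < ρ n) (hρ0 : Tendsto ρ atTop (nhds 0))
    (d : ℕ) (hd : 1 ≤ d) (a : ℕ → ℕ → ℂ)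
    (ha : ∀ j < d, ∃ N : ℕ, ∀ᶠ n in (ω : Filter ℕ),
      ‖a j n‖ < ρ n ^ (-(N : ℝ))) :
    ∃ z : ℕ → ℂ,
      (∃ N : ℕ, ∀ᶠ n in (ω : Filter ℕ), ‖z n‖ < ρ n ^ (-(N : ℝ))) ∧
      ∀ N : ℕ, ∀ᶠ n in (ω : Filter ℕ),
        ‖(z n) ^ d + ∑ j ∈ Finset.range d, a j n * (z n) ^ j‖
          < ρ n ^ (N : ℝ) := by
  have hω_le_atTop : (ω : Filter ℕ) ≤ atTop := by
    rw [← Nat.cofinite_eq_atTop]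
    exact ω.le_cofinite_or_eq_pure.resolve_right hω
  have hρ0' : Tendsto ρ ω (nhdsWithin 0 (Set.Ioi 0)) :=
    tendsto_nhdsWithin_iff.2 ⟨hρ0.mono_left hω_le_atTop, .of_forall hρpos⟩
  have hr : Tendsto (fun n => (ρ n)⁻¹) ω atTop := hρ0'.inv_tendsto_nhdsGT_zero
  have hpow (n N : ℕ) : ρ n ^ (-(N : ℝ)) = (ρ n)⁻¹ ^ N := by
    rw [Real.rpow_neg_natCast, zpow_neg, zpow_natCast, inv_pow]
  choose z hz using fun n => exists_root_monicOfCoeffs (by omega : d ≠ 0) fun j => a j n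
  refine ⟨z, ?_, fun N => .of_forall fun n => ?_⟩
  · have hcoeff (j : ℕ) (hj : j ∈ range d) :
        IsPolyBounded ω (fun n => (ρ n)⁻¹) fun n => ‖a j n‖ := by
      simpa only [IsPolyBounded, hpow] using ha j (mem_range.1 hj)
    have hbound := ((IsPolyBounded.const hr 1).add hr (IsPolyBounded.sum hr hcoeff)).mono
      (.of_forall fun n => (norm_lt_one_add_sum_norm_of_root (hz n)).le)
    simpa only [IsPolyBounded, hpow] using hbound
  · rw [hz n, norm_zero]
    exact Real.rpow_pos_of_pos (hρpos n) _
end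

section
/- The map Ψ sending a formal Puiseux series a = Σ_{j≥0} a_j t^{λ_j} to Σ_{j≥0} a_j ρ^{λ_j} ∈ ρℂ is an embedding of fields which preserves the non-Archimedean norms, i.e., Ψ is an injective ring homomorphism with |Ψ(a)|_{ρℂ} = |a|_𝕃 for all a ∈ 𝕃. -/
/-!
`Ψ(f)ₙ` is the partial sum of `Σ a_q ρₙ^q` over the exponents `q ≤ kₙ`, where the cutoff `kₙ ≤ n`
is the largest one whose coefficient mass `Σ_{q ≤ kₙ} |a_q|` is at most `ρₙ⁻¹`. Since `ρₙ → 0`,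
the cutoff tends to infinity, and for each fixed `M` the terms with `M < q ≤ kₙ` contribute
`o(ρₙ^M)`: those with `q ≤ M + 2` because the exponents of `f` have a gap above `M`, the others
because their mass times `ρₙ^(M+2)` is at most `ρₙ^(M+1)`. So `Ψ(f)` agrees with every partial sum
to the corresponding order, which gives additivity, and multiplicativity through the Cauchy
product of partial sums. The partial sum at the least exponent `μ` of `f` is the single term
`a_μ ρₙ^μ`, hence `Ψ(f) ≍ ρ^μ`, which yields injectivity and `ν(Ψ(f)) = μ`.
-/

open Filter

/-- An element of the field 𝕃 of formal Puiseux series Σ a_q t^q over ℂ,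
recorded by its coefficient function ℚ → ℂ, whose support is finite below any
bound (so it is a series Σ_{j≥0} a_j t^{λ_j} with λ_j ∈ ℚ increasing to ∞, or a
finite sum).  Addition is pointwise and multiplication is convolution. -/
def PuiseuxFun : Type :=
  {f : ℚ → ℂ // ∀ M : ℝ, {q : ℚ | f q ≠ 0 ∧ (q : ℝ) ≤ M}.Finite}

open Asymptotics Topology

noncomputable section

section RpowAsymptotics

variable {α E : Type*} [NormedAddCommGroup E] {l : Filter α} {ρ : α → ℝ}

lemma isLittleO_rpow_of_lt (hpos : ∀ x, 0 < ρ x) (hρ : Tendsto ρ l (𝓝 0)) {a b : ℝ} (hab : a < b) :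
    (fun x => ρ x ^ b) =o[l] fun x => ρ x ^ a := by
  refine (isLittleO_iff_tendsto' (.of_forall fun x h =>
    absurd h (Real.rpow_pos_of_pos (hpos x) a).ne')).2 ?_
  refine (hρ.rpow_const_nhds_zero (sub_pos.2 hab)).congr fun x => ?_
  rw [Real.rpow_sub (hpos x)]

lemma Asymptotics.IsLittleO.eventually_norm_lt {u : α → E} {v : α → ℝ} (h : u =o[l] v)
    (hv : ∀ x, 0 < v x) : ∀ᶠ x in l, ‖u x‖ < v x := by
  filter_upwards [h.def one_half_pos] with x hx
  rw [Real.norm_of_nonneg (hv x).le] at hx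
  linarith [hv x]

lemma Asymptotics.IsBigO.eventually_norm_lt_rpow (hpos : ∀ x, 0 < ρ x) (hρ : Tendsto ρ l (𝓝 0))
    {u : α → E} {a b : ℝ} (h : u =O[l] fun x => ρ x ^ b) (hab : a < b) :
    ∀ᶠ x in l, ‖u x‖ < ρ x ^ a :=
  (h.trans_isLittleO (isLittleO_rpow_of_lt hpos hρ hab)).eventually_norm_lt
    fun x => Real.rpow_pos_of_pos (hpos x) a

lemma not_forall_eventually_norm_lt_rpow [l.NeBot] (hpos : ∀ x, 0 < ρ x)
    (hρ : Tendsto ρ l (𝓝 0)) {u : α → E} {μ : ℝ} (h : u =Θ[l] fun x => ρ x ^ μ) :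
    ¬ ∀ N : ℕ, ∀ᶠ x in l, ‖u x‖ < ρ x ^ (N : ℝ) := by
  intro hsmall
  obtain ⟨N, hN⟩ := exists_nat_gt μ
  have hu : u =o[l] fun x => ρ x ^ μ :=
    (IsBigO.of_norm_eventuallyLE ((hsmall N).mono fun _ => le_of_lt)).trans_isLittleO
      (isLittleO_rpow_of_lt hpos hρ hN)
  exact isLittleO_irrefl (.of_forall fun x => (Real.rpow_pos_of_pos (hpos x) μ).ne')
    (h.isBigO_symm.trans_isLittleO hu)

lemma tendsto_log_norm_div_log_of_isTheta (hpos : ∀ x, 0 < ρ x) (hρ : Tendsto ρ l (𝓝 0))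
    {u : α → E} {μ : ℝ} (h : u =Θ[l] fun x => ρ x ^ μ) :
    Tendsto (fun x => Real.log ‖u x‖ / Real.log (ρ x)) l (𝓝 μ) := by
  have hlog : Tendsto (fun x => Real.log (ρ x)) l atBot :=
    Real.tendsto_log_nhdsGT_zero.comp (tendsto_nhdsWithin_iff.2 ⟨hρ, .of_forall hpos⟩)
  obtain ⟨c₁, hc₁, h₁⟩ := h.isBigO.exists_pos
  obtain ⟨c₂, hc₂, h₂⟩ := h.isBigO_symm.exists_pos
  have hbdd : (fun x => Real.log ‖u x‖ - μ * Real.log (ρ x)) =O[l] fun _ => (1 : ℝ) := by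
    refine IsBigO.of_bound (|Real.log c₁| + |Real.log c₂|) ?_
    filter_upwards [h₁.bound, h₂.bound] with x hx₁ hx₂
    have hr : 0 < ρ x ^ μ := Real.rpow_pos_of_pos (hpos x) μ
    rw [Real.norm_of_nonneg hr.le] at hx₁ hx₂
    have hu : 0 < ‖u x‖ := pos_of_mul_pos_right (hr.trans_le hx₂) hc₂.le
    have hup := Real.log_le_log hu hx₁
    have hlow := Real.log_le_log hr hx₂
    rw [Real.log_mul hc₁.ne' hr.ne', Real.log_rpow (hpos x)] at hup
    rw [Real.log_mul hc₂.ne' hu.ne', Real.log_rpow (hpos x)] at hlow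
    rw [norm_one, mul_one, Real.norm_eq_abs, abs_le]
    constructor <;> linarith [le_abs_self (Real.log c₁), le_abs_self (Real.log c₂),
      abs_nonneg (Real.log c₁), abs_nonneg (Real.log c₂)]
  have hdiv := (hbdd.trans_isLittleO ((isLittleO_one_left_iff ℝ).2
    (tendsto_abs_atBot_atTop.comp hlog))).tendsto_div_nhds_zero
  rw [← zero_add μ]
  refine (hdiv.add_const μ).congr' ?_
  filter_upwards [hlog.eventually_lt_atBot 0] with x hx
  rw [sub_div, mul_div_cancel_right₀ _ hx.ne, sub_add_cancel]

end RpowAsymptotics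

section Monomial

variable {r : ℝ}

def monomialAt (r : ℝ) (q : ℚ) : ℂ := ((r ^ (q : ℝ) : ℝ) : ℂ)

lemma norm_monomialAt (hr : 0 ≤ r) (q : ℚ) : ‖monomialAt r q‖ = r ^ (q : ℝ) := by
  rw [monomialAt, Complex.norm_real, Real.norm_of_nonneg (Real.rpow_nonneg hr _)]

lemma monomialAt_add (hr : 0 < r) (p q : ℚ) :
    monomialAt r (p + q) = monomialAt r p * monomialAt r q := by
  rw [monomialAt, monomialAt, monomialAt, Rat.cast_add, Real.rpow_add hr, Complex.ofReal_mul]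

lemma norm_sum_mul_monomialAt_le (hr₀ : 0 < r) (hr₁ : r ≤ 1) (c : ℚ → ℂ) (s : Finset ℚ) {m : ℝ}
    (hm : ∀ p ∈ s, m ≤ p) : ‖∑ p ∈ s, c p * monomialAt r p‖ ≤ (∑ p ∈ s, ‖c p‖) * r ^ m := by
  rw [Finset.sum_mul]
  refine (norm_sum_le _ _).trans (Finset.sum_le_sum fun p hp => ?_)
  rw [norm_mul, norm_monomialAt hr₀.le]
  exact mul_le_mul_of_nonneg_left (Real.rpow_le_rpow_of_exponent_ge hr₀ hr₁ (hm p hp))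
    (norm_nonneg _)

end Monomial

namespace PuiseuxFun

def supportLE (f : PuiseuxFun) (M : ℝ) : Finset ℚ := (f.2 M).toFinset

def partialSum (f : PuiseuxFun) (r M : ℝ) : ℂ := ∑ p ∈ f.supportLE M, f.1 p * monomialAt r p

def mass (f : PuiseuxFun) (M : ℝ) : ℝ := ∑ p ∈ f.supportLE M, ‖f.1 p‖

variable {f g h : PuiseuxFun} {r m M : ℝ}

lemma mem_supportLE {q : ℚ} : q ∈ f.supportLE M ↔ f.1 q ≠ 0 ∧ (q : ℝ) ≤ M :=
  Set.Finite.mem_toFinset _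

lemma supportLE_mono {M' : ℝ} (hMM' : M ≤ M') : f.supportLE M ⊆ f.supportLE M' := fun _ hq =>
  mem_supportLE.2 ⟨(mem_supportLE.1 hq).1, (mem_supportLE.1 hq).2.trans hMM'⟩

lemma exists_lowerBound (f : PuiseuxFun) : ∃ m : ℝ, ∀ q : ℚ, f.1 q ≠ 0 → m ≤ q := by
  obtain ⟨b, hb⟩ := (f.2 0).bddBelow
  refine ⟨min (b : ℝ) 0, fun q hq => ?_⟩
  by_cases hq0 : (q : ℝ) ≤ 0
  · exact (min_le_left _ _).trans (by exact_mod_cast hb ⟨hq, hq0⟩)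
  · exact (min_le_right _ _).trans (le_of_not_ge hq0)

lemma exists_isLeast_support (hf : ∃ q, f.1 q ≠ 0) : ∃ μ, IsLeast (Function.support f.1) μ := by
  obtain ⟨q₀, hq₀⟩ := hf
  have hne : (f.supportLE q₀).Nonempty := ⟨q₀, mem_supportLE.2 ⟨hq₀, le_rfl⟩⟩
  refine ⟨(f.supportLE q₀).min' hne, (mem_supportLE.1 (Finset.min'_mem _ hne)).1, fun q hq => ?_⟩
  by_cases hqq₀ : q ≤ q₀
  · exact Finset.min'_le _ _ (mem_supportLE.2 ⟨hq, by exact_mod_cast hqq₀⟩)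
  · exact (Finset.min'_le _ _ (mem_supportLE.2 ⟨hq₀, le_rfl⟩)).trans (le_of_not_ge hqq₀)

lemma exists_gap (f : PuiseuxFun) (M : ℝ) :
    ∃ μ : ℝ, M < μ ∧ ∀ q : ℚ, f.1 q ≠ 0 → M < q → μ ≤ q := by
  set s := insert (M + 1)
    (((f.supportLE (M + 1)).filter fun q : ℚ => M < (q : ℝ)).image ((↑) : ℚ → ℝ))
  refine ⟨s.min' (Finset.insert_nonempty _ _), ?_, fun q hq hMq => ?_⟩
  · simp only [s, Finset.lt_min'_iff, Finset.mem_insert, Finset.mem_image, Finset.mem_filter]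
    rintro _ (rfl | ⟨q, ⟨-, hq⟩, rfl⟩)
    exacts [lt_add_one M, hq]
  · by_cases hq1 : (q : ℝ) ≤ M + 1
    · exact Finset.min'_le _ _ (Finset.mem_insert_of_mem (Finset.mem_image_of_mem _
        (Finset.mem_filter.2 ⟨mem_supportLE.2 ⟨hq, hq1⟩, hMq⟩)))
    · exact (Finset.min'_le _ _ (Finset.mem_insert_self _ _)).trans (le_of_not_ge hq1)

lemma partialSum_eq_sum_of_subset {U : Finset ℚ} (hsub : f.supportLE M ⊆ U)
    (hle : ∀ q ∈ U, (q : ℝ) ≤ M) : f.partialSum r M = ∑ p ∈ U, f.1 p * monomialAt r p := by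
  refine Finset.sum_subset hsub fun q hqU hq => ?_
  rw [not_ne_iff.1 fun h0 => hq (mem_supportLE.2 ⟨h0, hle q hqU⟩), zero_mul]

lemma partialSum_add (hadd : ∀ q, h.1 q = f.1 q + g.1 q) (r M : ℝ) :
    h.partialSum r M = f.partialSum r M + g.partialSum r M := by
  set U := f.supportLE M ∪ g.supportLE M
  have hle : ∀ q ∈ U, (q : ℝ) ≤ M := fun q hq => by
    rcases Finset.mem_union.1 hq with hq | hq <;> exact (mem_supportLE.1 hq).2
  have hsub : h.supportLE M ⊆ U := fun q hq => by
    obtain ⟨hq0, hqM⟩ := mem_supportLE.1 hq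
    rw [hadd] at hq0
    by_cases hf : f.1 q = 0
    · exact Finset.mem_union_right _ (mem_supportLE.2 ⟨by simpa [hf] using hq0, hqM⟩)
    · exact Finset.mem_union_left _ (mem_supportLE.2 ⟨hf, hqM⟩)
  rw [partialSum_eq_sum_of_subset hsub hle,
    partialSum_eq_sum_of_subset Finset.subset_union_left hle,
    partialSum_eq_sum_of_subset Finset.subset_union_right hle, ← Finset.sum_add_distrib]
  exact Finset.sum_congr rfl fun q _ => by rw [hadd, add_mul]

lemma partialSum_of_isLeast {μ : ℚ} (hμ : IsLeast (Function.support f.1) μ) (r : ℝ) :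
    f.partialSum r μ = f.1 μ * monomialAt r μ := by
  have : f.supportLE μ = {μ} := Finset.eq_singleton_iff_unique_mem.2
    ⟨mem_supportLE.2 ⟨hμ.1, le_rfl⟩, fun q hq =>
      le_antisymm (by exact_mod_cast (mem_supportLE.1 hq).2) (hμ.2 (mem_supportLE.1 hq).1)⟩
  rw [partialSum, this, Finset.sum_singleton]

lemma norm_partialSum_le (hr₀ : 0 < r) (hr₁ : r ≤ 1) (hm : ∀ q : ℚ, f.1 q ≠ 0 → m ≤ q)
    (M : ℝ) : ‖f.partialSum r M‖ ≤ f.mass M * r ^ m :=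
  norm_sum_mul_monomialAt_le hr₀ hr₁ _ _ fun p hp => hm p (mem_supportLE.1 hp).1

lemma norm_partialSum_sub_le (hr₀ : 0 < r) (hr₁ : r ≤ 1) {M' μ : ℝ} (hMM' : M ≤ M')
    (hgap : ∀ q : ℚ, f.1 q ≠ 0 → M < q → μ ≤ q) :
    ‖f.partialSum r M' - f.partialSum r M‖ ≤ f.mass M' * r ^ μ := by
  rw [partialSum, partialSum, ← Finset.sum_sdiff_eq_sub (supportLE_mono hMM')]
  refine (norm_sum_mul_monomialAt_le (m := μ) hr₀ hr₁ _ _ fun p hp => ?_).trans ?_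
  · obtain ⟨hp', hpM⟩ := Finset.mem_sdiff.1 hp
    exact hgap p (mem_supportLE.1 hp').1
      (lt_of_not_ge fun h => hpM (mem_supportLE.2 ⟨(mem_supportLE.1 hp').1, h⟩))
  · exact mul_le_mul_of_nonneg_right (Finset.sum_le_sum_of_subset_of_nonneg Finset.sdiff_subset
      fun _ _ _ => norm_nonneg _) (Real.rpow_nonneg hr₀.le _)

section Convolution

/-- With `m` a common lower bound of the exponents of `f` and `g`, every pair of exponents with
sum at most `M` has both entries at most `M - m`, so it occurs here. -/
def lowPairs (f g : PuiseuxFun) (m M : ℝ) : Finset (ℚ × ℚ) :=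
  (f.supportLE (M - m) ×ˢ g.supportLE (M - m)).filter fun pp => ((pp.1 + pp.2 : ℚ) : ℝ) ≤ M

lemma finsum_mul_sub_eq_sum_lowPairs (hf : ∀ q : ℚ, f.1 q ≠ 0 → m ≤ q)
    (hg : ∀ q : ℚ, g.1 q ≠ 0 → m ≤ q) {q : ℚ} (hq : (q : ℝ) ≤ M) :
    ∑ᶠ p, f.1 p * g.1 (q - p) =
      ∑ pp ∈ lowPairs f g m M with pp.1 + pp.2 = q, f.1 pp.1 * g.1 pp.2 := by
  set s := (lowPairs f g m M).filter fun pp => pp.1 + pp.2 = q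
  have hinj : Set.InjOn Prod.fst (s : Set (ℚ × ℚ)) := fun a ha b hb hab => by
    have ha' := (Finset.mem_filter.1 ha).2
    have hb' := (Finset.mem_filter.1 hb).2
    exact Prod.ext hab (by linarith)
  rw [finsum_eq_sum_of_support_subset _ (s := s.image Prod.fst) ?_, Finset.sum_image hinj]
  · refine Finset.sum_congr rfl fun pp hpp => ?_
    rw [← (Finset.mem_filter.1 hpp).2, add_sub_cancel_left]
  · intro p hp
    have hfp : f.1 p ≠ 0 := left_ne_zero_of_mul hp
    have hgp : g.1 (q - p) ≠ 0 := right_ne_zero_of_mul hp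
    have hp₁ := hf p hfp
    have hp₂ := hg _ hgp
    push_cast at hp₂
    refine Finset.mem_coe.2
      (Finset.mem_image.2 ⟨(p, q - p), Finset.mem_filter.2 ⟨?_, by ring⟩, rfl⟩)
    refine Finset.mem_filter.2 ⟨Finset.mem_product.2 ⟨mem_supportLE.2 ⟨hfp, by linarith⟩,
      mem_supportLE.2 ⟨hgp, by push_cast; linarith⟩⟩, by push_cast; linarith⟩

lemma sum_lowPairs_eq_partialSum (hf : ∀ q : ℚ, f.1 q ≠ 0 → m ≤ q)
    (hg : ∀ q : ℚ, g.1 q ≠ 0 → m ≤ q) (hmul : ∀ q : ℚ, h.1 q = ∑ᶠ p : ℚ, f.1 p * g.1 (q - p))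
    (r : ℝ) :
    ∑ pp ∈ lowPairs f g m M, f.1 pp.1 * g.1 pp.2 * monomialAt r (pp.1 + pp.2) =
      h.partialSum r M := by
  set T := (lowPairs f g m M).image fun pp => pp.1 + pp.2
  have hT : ∀ q ∈ T, (q : ℝ) ≤ M := fun q hq => by
    obtain ⟨pp, hpp, rfl⟩ := Finset.mem_image.1 hq
    exact (Finset.mem_filter.1 hpp).2
  rw [← Finset.sum_fiberwise_of_maps_to (t := T) fun pp hpp => Finset.mem_image_of_mem _ hpp,
    partialSum_eq_sum_of_subset (U := T) ?_ hT]
  · refine Finset.sum_congr rfl fun q hq => ?_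
    rw [hmul, finsum_mul_sub_eq_sum_lowPairs hf hg (hT q hq), Finset.sum_mul]
    exact Finset.sum_congr rfl fun pp hpp => by rw [(Finset.mem_filter.1 hpp).2]
  · intro q hq
    obtain ⟨hq0, hqM⟩ := mem_supportLE.1 hq
    rw [hmul, finsum_mul_sub_eq_sum_lowPairs hf hg hqM] at hq0
    obtain ⟨pp, hpp, -⟩ := Finset.exists_ne_zero_of_sum_ne_zero hq0
    exact Finset.mem_image.2 ⟨pp, (Finset.mem_filter.1 hpp).1, (Finset.mem_filter.1 hpp).2⟩

lemma norm_partialSum_sub_mul_le (hf : ∀ q : ℚ, f.1 q ≠ 0 → m ≤ q)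
    (hg : ∀ q : ℚ, g.1 q ≠ 0 → m ≤ q) (hmul : ∀ q : ℚ, h.1 q = ∑ᶠ p : ℚ, f.1 p * g.1 (q - p))
    (hr₀ : 0 < r) (hr₁ : r ≤ 1) :
    ‖h.partialSum r M - f.partialSum r (M - m) * g.partialSum r (M - m)‖ ≤
      f.mass (M - m) * g.mass (M - m) * r ^ M := by
  set P := f.supportLE (M - m) ×ˢ g.supportLE (M - m)
  have hprod : f.partialSum r (M - m) * g.partialSum r (M - m) =
      ∑ pp ∈ P, f.1 pp.1 * g.1 pp.2 * monomialAt r (pp.1 + pp.2) := by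
    rw [partialSum, partialSum, Finset.sum_mul_sum, ← Finset.sum_product']
    exact Finset.sum_congr rfl fun pp _ => by rw [monomialAt_add hr₀]; ring
  rw [hprod, ← Finset.sum_filter_add_sum_filter_not P fun pp => ((pp.1 + pp.2 : ℚ) : ℝ) ≤ M,
    ← sum_lowPairs_eq_partialSum hf hg hmul r, lowPairs, sub_add_cancel_left, norm_neg]
  calc _ ≤ ∑ pp ∈ P with ¬((pp.1 + pp.2 : ℚ) : ℝ) ≤ M, ‖f.1 pp.1‖ * ‖g.1 pp.2‖ * r ^ M := by
        refine (norm_sum_le _ _).trans (Finset.sum_le_sum fun pp hpp => ?_)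
        rw [norm_mul, norm_mul, norm_monomialAt hr₀.le]
        exact mul_le_mul_of_nonneg_left (Real.rpow_le_rpow_of_exponent_ge hr₀ hr₁
          (le_of_not_ge (Finset.mem_filter.1 hpp).2)) (by positivity)
    _ ≤ ∑ pp ∈ P, ‖f.1 pp.1‖ * ‖g.1 pp.2‖ * r ^ M :=
        Finset.sum_le_sum_of_subset_of_nonneg (Finset.filter_subset _ _) fun _ _ _ => by positivity
    _ = _ := by rw [← Finset.sum_mul, mass, mass, Finset.sum_mul_sum, ← Finset.sum_product']

end Convolution

section Robinson

variable {ρ : ℕ → ℝ} {f g h : PuiseuxFun}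

def cutoff (ρ : ℕ → ℝ) (f : PuiseuxFun) (n : ℕ) : ℕ :=
  Nat.findGreatest (fun k => f.mass k ≤ (ρ n)⁻¹) n

def toRobinson (ρ : ℕ → ℝ) (f : PuiseuxFun) (n : ℕ) : ℂ :=
  f.partialSum (ρ n) (cutoff ρ f n)

lemma eventually_le_cutoff (hpos : ∀ n, 0 < ρ n) (hρ : Tendsto ρ atTop (𝓝 0)) (f : PuiseuxFun)
    (k : ℕ) : ∀ᶠ n in atTop, k ≤ cutoff ρ f n ∧ f.mass (cutoff ρ f n) ≤ (ρ n)⁻¹ := by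
  have hinv : Tendsto (fun n => (ρ n)⁻¹) atTop atTop :=
    (tendsto_nhdsWithin_iff.2 ⟨hρ, .of_forall hpos⟩).inv_tendsto_nhdsGT_zero
  filter_upwards [hinv.eventually_ge_atTop (f.mass k), eventually_ge_atTop k] with n hmass hn
  exact ⟨Nat.le_findGreatest hn hmass,
    Nat.findGreatest_spec (P := fun k : ℕ => f.mass k ≤ (ρ n)⁻¹) hn hmass⟩

lemma isLittleO_toRobinson_sub_partialSum (hpos : ∀ n, 0 < ρ n) (hρ : Tendsto ρ atTop (𝓝 0))
    (f : PuiseuxFun) (M : ℝ) :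
    (fun n => toRobinson ρ f n - f.partialSum (ρ n) M) =o[atTop] fun n => ρ n ^ M := by
  obtain ⟨μ, hMμ, hgap⟩ := f.exists_gap M
  have hbound : ∀ᶠ n in atTop, ‖toRobinson ρ f n - f.partialSum (ρ n) M‖ ≤
      ρ n ^ (M + 1) + f.mass (M + 2) * ρ n ^ μ := by
    filter_upwards [hρ.eventually (ge_mem_nhds one_pos), eventually_le_cutoff hpos hρ f (⌈M⌉₊ + 2)]
      with n hρ₁ ⟨hcut, hmass⟩
    have hρ₀ := hpos n
    have hM₂ : M + 2 ≤ cutoff ρ f n := by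
      have : ((⌈M⌉₊ + 2 : ℕ) : ℝ) ≤ cutoff ρ f n := by exact_mod_cast hcut
      push_cast at this
      linarith [Nat.le_ceil M]
    calc _ = ‖(f.partialSum (ρ n) (cutoff ρ f n) - f.partialSum (ρ n) (M + 2)) +
          (f.partialSum (ρ n) (M + 2) - f.partialSum (ρ n) M)‖ := by
          rw [sub_add_sub_cancel, toRobinson]
      _ ≤ f.mass (cutoff ρ f n) * ρ n ^ (M + 2) + f.mass (M + 2) * ρ n ^ μ :=
          norm_add_le_of_le (f.norm_partialSum_sub_le hρ₀ hρ₁ hM₂ fun _ _ hq => hq.le)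
            (f.norm_partialSum_sub_le hρ₀ hρ₁ (by linarith) hgap)
      _ ≤ (ρ n)⁻¹ * ρ n ^ (M + 2) + f.mass (M + 2) * ρ n ^ μ := by gcongr
      _ = _ := by rw [← Real.rpow_neg_one, ← Real.rpow_add hρ₀]; ring_nf
  refine (IsBigO.of_norm_eventuallyLE hbound).trans_isLittleO ?_
  exact (isLittleO_rpow_of_lt hpos hρ (lt_add_one M)).add
    ((isLittleO_rpow_of_lt hpos hρ hMμ).const_mul_left _)

lemma isBigO_partialSum (hpos : ∀ n, 0 < ρ n) (hρ : Tendsto ρ atTop (𝓝 0)) {m : ℝ}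
    (hm : ∀ q : ℚ, f.1 q ≠ 0 → m ≤ q) (M : ℝ) :
    (fun n => f.partialSum (ρ n) M) =O[atTop] fun n => ρ n ^ m := by
  refine IsBigO.of_bound (f.mass M) ?_
  filter_upwards [hρ.eventually (ge_mem_nhds one_pos)] with n hρ₁
  rw [Real.norm_of_nonneg (Real.rpow_nonneg (hpos n).le _)]
  exact f.norm_partialSum_le (hpos n) hρ₁ hm M

lemma isBigO_toRobinson (hpos : ∀ n, 0 < ρ n) (hρ : Tendsto ρ atTop (𝓝 0)) {m : ℝ}
    (hm : ∀ q : ℚ, f.1 q ≠ 0 → m ≤ q) : toRobinson ρ f =O[atTop] fun n => ρ n ^ m :=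
  ((isLittleO_toRobinson_sub_partialSum hpos hρ f m).isBigO.add
    (isBigO_partialSum hpos hρ hm m)).congr_left fun _ => sub_add_cancel _ _

lemma isTheta_toRobinson (hpos : ∀ n, 0 < ρ n) (hρ : Tendsto ρ atTop (𝓝 0)) {μ : ℚ}
    (hμ : IsLeast (Function.support f.1) μ) : toRobinson ρ f =Θ[atTop] fun n => ρ n ^ (μ : ℝ) := by
  have hlead : (fun n => f.partialSum (ρ n) μ) =Θ[atTop] fun n => ρ n ^ (μ : ℝ) := by
    simp_rw [f.partialSum_of_isLeast hμ]
    exact (isTheta_const_mul_left hμ.1).2 (.of_norm_eventuallyEq (.of_eq (funext fun n =>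
      norm_monomialAt (hpos n).le μ)))
  simpa only [Pi.add_def, add_sub_cancel] using
    hlead.add_isLittleO (isLittleO_toRobinson_sub_partialSum hpos hρ f μ)

lemma isLittleO_toRobinson_sub_add (hpos : ∀ n, 0 < ρ n) (hρ : Tendsto ρ atTop (𝓝 0))
    (hadd : ∀ q, h.1 q = f.1 q + g.1 q) (M : ℝ) :
    (fun n => toRobinson ρ h n - (toRobinson ρ f n + toRobinson ρ g n)) =o[atTop]
      fun n => ρ n ^ M :=
  ((isLittleO_toRobinson_sub_partialSum hpos hρ h M).sub
    ((isLittleO_toRobinson_sub_partialSum hpos hρ f M).add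
      (isLittleO_toRobinson_sub_partialSum hpos hρ g M))).congr_left fun n => by
    rw [partialSum_add hadd]; ring

lemma isBigO_toRobinson_sub_mul (hpos : ∀ n, 0 < ρ n) (hρ : Tendsto ρ atTop (𝓝 0)) {m : ℝ}
    (hf : ∀ q : ℚ, f.1 q ≠ 0 → m ≤ q) (hg : ∀ q : ℚ, g.1 q ≠ 0 → m ≤ q)
    (hmul : ∀ q : ℚ, h.1 q = ∑ᶠ p : ℚ, f.1 p * g.1 (q - p)) (M : ℝ) :
    (fun n => toRobinson ρ h n - toRobinson ρ f n * toRobinson ρ g n) =O[atTop]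
      fun n => ρ n ^ M := by
  have hsplit : ∀ n, ρ n ^ (M - m) * ρ n ^ m = ρ n ^ M := fun n => by
    rw [← Real.rpow_add (hpos n), sub_add_cancel]
  have hh := (isLittleO_toRobinson_sub_partialSum hpos hρ h M).isBigO
  have hprod : (fun n => h.partialSum (ρ n) M -
      f.partialSum (ρ n) (M - m) * g.partialSum (ρ n) (M - m)) =O[atTop] fun n => ρ n ^ M := by
    refine IsBigO.of_bound (f.mass (M - m) * g.mass (M - m)) ?_
    filter_upwards [hρ.eventually (ge_mem_nhds one_pos)] with n hρ₁
    rw [Real.norm_of_nonneg (Real.rpow_nonneg (hpos n).le _)]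
    exact norm_partialSum_sub_mul_le hf hg hmul (hpos n) hρ₁
  have hf' := ((isLittleO_toRobinson_sub_partialSum hpos hρ f (M - m)).isBigO.mul
    (isBigO_toRobinson hpos hρ hg)).congr_right hsplit
  have hg' := ((isBigO_partialSum hpos hρ hf (M - m)).mul
    (isLittleO_toRobinson_sub_partialSum hpos hρ g (M - m)).isBigO).congr_right
      fun n => (mul_comm _ _).trans (hsplit n)
  exact (((hh.add hprod).sub hf').sub hg').congr_left fun n => by ring

end Robinson

end PuiseuxFun

end

lemma Ultrafilter.le_atTop_of_not_principal (ω : Ultrafilter ℕ) (hω : ¬∃ a, ω = pure a) :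
    (ω : Filter ℕ) ≤ atTop :=
  (ω.le_cofinite_or_eq_pure.resolve_right hω).trans Nat.cofinite_eq_atTop.le

lemma omegaLim_of_tendsto {ω : Ultrafilter ℕ} {u : ℕ → ℝ} {L : ℝ} (h : Tendsto u ω (𝓝 L)) :
    OmegaLim ω u L := fun ε hε =>
  Ultrafilter.mem_coe.1 <| (Metric.tendsto_nhds.1 h ε hε).mono fun _ hn => by
    rwa [Real.dist_eq] at hn

lemma leNormBall_of_isLittleO {ω : Ultrafilter ℕ} {ρ : ℕ → ℝ} (hpos : ∀ n, 0 < ρ n)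
    (hρ : Tendsto ρ ω (𝓝 0)) {u : ℕ → ℂ} {q : ℝ} (h : u =o[ω] fun n => ρ n ^ q) :
    LeNormBall ω ρ u q := fun _ hε =>
  ((h.trans (isLittleO_rpow_of_lt hpos hρ (sub_lt_self q hε))).eventually_norm_lt
    fun n => Real.rpow_pos_of_pos (hpos n) _).mono fun _ => le_of_lt

open PuiseuxFun

/-- The map Ψ : 𝕃 → ρℂ, a = Σ a_j t^{λ_j} ↦ Σ a_j ρ^{λ_j}, is an embedding of
fields preserving the non-Archimedean norms: Ψ(a) is the ν-limit of the partial
sums of Σ a_j ρ^{λ_j}; Ψ is additive and multiplicative (modulo M₁, i.e. as a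
map to ρℂ = M₀/M₁), injective (nonzero series have Ψ-image nonzero in ρℂ), and
ν(Ψ(a)) = min{λ_j : a_j ≠ 0}, i.e. |Ψ(a)|_{ρℂ} = |a|_𝕃. -/
theorem puiseux_embedding
    (ω : Ultrafilter ℕ) (hω : ¬∃ a : ℕ, ω = pure a)
    (ρ : ℕ → ℝ) (hρpos : ∀ n, 0 < ρ n) (hρ0 : Tendsto ρ atTop (nhds 0)) :
    ∃ Ψ : PuiseuxFun → (ℕ → ℂ),
      -- Ψ f represents an element of ρℂ:
      (∀ f : PuiseuxFun, ∃ N : ℕ, ∀ᶠ n in (ω : Filter ℕ),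
        ‖Ψ f n‖ < ρ n ^ (-(N : ℝ))) ∧
      -- Ψ f is the sum of the series Σ a_j ρ^{λ_j} in ρℂ:
      (∀ f : PuiseuxFun, ∀ q : ℝ, ∃ M : ℝ,
        LeNormBall ω ρ
          (fun n => Ψ f n -
            ∑ p ∈ (f.2 M).toFinset, f.1 p * ((ρ n ^ (p : ℝ) : ℝ) : ℂ)) q) ∧
      -- Ψ is additive:
      (∀ f g h : PuiseuxFun, (∀ q : ℚ, h.1 q = f.1 q + g.1 q) →
        ∀ N : ℕ, ∀ᶠ n in (ω : Filter ℕ),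
          ‖Ψ h n - (Ψ f n + Ψ g n)‖ < ρ n ^ (N : ℝ)) ∧
      -- Ψ is multiplicative:
      (∀ f g h : PuiseuxFun, (∀ q : ℚ, h.1 q = ∑ᶠ p : ℚ, f.1 p * g.1 (q - p)) →
        ∀ N : ℕ, ∀ᶠ n in (ω : Filter ℕ),
          ‖Ψ h n - Ψ f n * Ψ g n‖ < ρ n ^ (N : ℝ)) ∧
      -- Ψ is injective:
      (∀ f : PuiseuxFun, (∃ q : ℚ, f.1 q ≠ 0) →
        ¬ ∀ N : ℕ, ∀ᶠ n in (ω : Filter ℕ),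
          ‖Ψ f n‖ < ρ n ^ (N : ℝ)) ∧
      -- Ψ preserves the non-Archimedean norms:
      (∀ f : PuiseuxFun, (∃ q : ℚ, f.1 q ≠ 0) →
        OmegaLim ω (fun n => Real.log (‖Ψ f n‖) / Real.log (ρ n))
          (sInf {x : ℝ | ∃ q : ℚ, f.1 q ≠ 0 ∧ (q : ℝ) = x})) := by
  have hωρ : (ω : Filter ℕ) ≤ atTop := ω.le_atTop_of_not_principal hω
  have hρω : Tendsto ρ ω (𝓝 0) := hρ0.mono_left hωρ
  refine ⟨toRobinson ρ, fun f => ?_, fun f q => ?_, fun f g h hadd N => ?_,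
    fun f g h hmul N => ?_, fun f hf => ?_, fun f hf => ?_⟩
  · obtain ⟨m, hm⟩ := f.exists_lowerBound
    obtain ⟨N, hN⟩ := exists_nat_gt (-m)
    exact ⟨N, ((isBigO_toRobinson hρpos hρ0 hm).mono hωρ).eventually_norm_lt_rpow hρpos hρω
      (by linarith)⟩
  · exact ⟨q, leNormBall_of_isLittleO hρpos hρω
      ((isLittleO_toRobinson_sub_partialSum hρpos hρ0 f q).mono hωρ)⟩
  · exact ((isLittleO_toRobinson_sub_add hρpos hρ0 hadd N).mono hωρ).eventually_norm_lt
      fun n => Real.rpow_pos_of_pos (hρpos n) _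
  · obtain ⟨mf, hmf⟩ := f.exists_lowerBound
    obtain ⟨mg, hmg⟩ := g.exists_lowerBound
    have hf : ∀ q : ℚ, f.1 q ≠ 0 → min mf mg ≤ q := fun q hq => (min_le_left _ _).trans (hmf q hq)
    have hg : ∀ q : ℚ, g.1 q ≠ 0 → min mf mg ≤ q := fun q hq => (min_le_right _ _).trans (hmg q hq)
    exact ((isBigO_toRobinson_sub_mul hρpos hρ0 hf hg hmul (N + 1)).mono hωρ
      ).eventually_norm_lt_rpow hρpos hρω (lt_add_one _)
  · obtain ⟨μ, hμ⟩ := exists_isLeast_support hf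
    exact not_forall_eventually_norm_lt_rpow hρpos hρω ((isTheta_toRobinson hρpos hρ0 hμ).mono hωρ)
  · obtain ⟨μ, hμ⟩ := exists_isLeast_support hf
    rw [(Rat.cast_mono.map_isLeast hμ).csInf_eq]
    exact omegaLim_of_tendsto ((tendsto_log_norm_div_log_of_isTheta hρpos hρ0
      (isTheta_toRobinson hρpos hρ0 hμ)).mono_left hωρ)
end
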